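/- Impossibility of interference-free service to more than M_D* groups: Suppose the generic rank assumption holds, G₁ ≤ … ≤ G_M, and N < N_{L+1} for some L ∈ {1,…,M−1}. Then for every subset S ⊆ {1,…,M} of groups with |S| = L+1, there exists m ∈ S such that the only vector w ∈ ℂ^N satisfying h_kᴴ w = 0 for every user k belonging to some group in S\{m} is w = 0. -/

import Mathlib

/-! Take `m` to be the group of `S` with the smallest index. The remaining `L` groups of `S` all
have index at least `1` (0-indexed), so by monotonicity of the group sizes they contain at least
`G₂ + ⋯ + G_{L+1} = N_{L+1} - 1 ≥ N` users. By the generic rank assumption the channels of any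
`N` users span `ℂ^N`, so a vector orthogonal to all of them vanishes. -/

open scoped BigOperators

noncomputable section

/-- `hᴴ p`. -/
def hinner {N : ℕ} (h p : Fin N → ℂ) : ℂ := ∑ i, star (h i) * p i

/-- Transmit power of a beamformer. -/
def bpow {N : ℕ} (p : Fin N → ℂ) : ℝ := ∑ i, ‖p i‖ ^ 2

/-- Generic rank assumption. -/
def GenericRank {N K : ℕ} (h : Fin K → Fin N → ℂ) : Prop :=
  ∀ S : Finset (Fin K),
    (Matrix.of fun (i : Fin N) (k : S) => h k.1 i).rank = min N S.card

/-- Size of group `m` (groups indexed from `0`). -/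
def Gsize {K M : ℕ} (μ : Fin K → Fin M) (m : ℕ) : ℕ :=
  (Finset.univ.filter fun k => (μ k : ℕ) = m).card

/-- `N_L = 1 + Σ_{m=2}^{L} G_m` (`1`-indexed), i.e. `1 + Σ_{m=1}^{L-1} G_m` with our
`0`-indexed groups. -/
def NL {K M : ℕ} (μ : Fin K → Fin M) (L : ℕ) : ℕ :=
  1 + ∑ m ∈ Finset.Ico 1 L, Gsize μ m

/-- Rate of user `k` under classical (designated) beamforming `p`. -/
def userRate {N K M : ℕ} (h : Fin K → Fin N → ℂ) (μ : Fin K → Fin M)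
    (σ2 : ℝ) (p : Fin M → Fin N → ℂ) (k : Fin K) : ℝ :=
  Real.logb 2 (1 + ‖hinner (h k) (p (μ k))‖ ^ 2 /
    ((∑ m ∈ Finset.univ.erase (μ k), ‖hinner (h k) (p m)‖ ^ 2) + σ2))

open Finset Matrix

theorem Matrix.eq_zero_of_mulVec_eq_zero_of_rank_eq_card {K m n : Type*} [Field K] [Fintype m]
    [Fintype n] {A : Matrix m n K} (hA : A.rank = Fintype.card n) {v : n → K}
    (hv : A *ᵥ v = 0) : v = 0 := by
  have hker : LinearMap.ker A.mulVecLin = ⊥ := by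
    have := A.mulVecLin.finrank_range_add_finrank_ker
    rw [Module.finrank_fintype_fun_eq_card, ← Matrix.rank, hA] at this
    exact Submodule.finrank_eq_zero.1 (by omega)
  exact ker_mulVecLin_eq_bot_iff.1 hker v hv

theorem Finset.sum_Ico_le_sum_of_monotoneOn {f : ℕ → ℕ} {a b : ℕ}
    (hf : MonotoneOn f (Set.Iio b)) (T : Finset ℕ) (hT : ∀ i ∈ T, a ≤ i ∧ i < b) :
    ∑ i ∈ Ico a (a + #T), f i ≤ ∑ i ∈ T, f i := by
  induction T using Finset.induction_on_max with
  | empty => simp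
  | insert x s hlt ih =>
    have hx : x ∉ s := fun hx => lt_irrefl x (hlt x hx)
    have hs : ∀ i ∈ s, a ≤ i ∧ i < b := fun i hi => hT i (mem_insert_of_mem hi)
    obtain ⟨hax, hxb⟩ := hT x (mem_insert_self x s)
    have hcard : #s ≤ x - a :=
      (card_le_card fun i hi => mem_Ico.2 ⟨(hs i hi).1, hlt i hi⟩).trans (Nat.card_Ico a x).le
    rw [card_insert_of_notMem hx, ← add_assoc, sum_Ico_succ_top (by omega), sum_insert hx,
      add_comm (f x)]
    exact add_le_add (ih hs) (hf (by simp; omega) hxb (by omega))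

theorem card_filter_mem_eq_sum_Gsize {K M : ℕ} (μ : Fin K → Fin M) (T : Finset (Fin M)) :
    #{k | μ k ∈ T} = ∑ m ∈ T, Gsize μ m := by
  rw [card_eq_sum_card_fiberwise (s := {k | μ k ∈ T}) fun k hk => by simpa using hk]
  refine sum_congr rfl fun m hm => congrArg card ?_
  ext k
  simp only [mem_filter, mem_univ, true_and, Fin.val_inj]
  exact ⟨And.right, fun hk => ⟨hk ▸ hm, hk⟩⟩

open scoped ComplexOrder in
theorem eq_zero_of_hinner_eq_zero_of_card_le {N K : ℕ} {h : Fin K → Fin N → ℂ}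
    (hrank : GenericRank h) {U : Finset (Fin K)} (hU : N ≤ #U) {w : Fin N → ℂ}
    (hw : ∀ k ∈ U, hinner (h k) w = 0) : w = 0 := by
  let A : Matrix (Fin N) U ℂ := Matrix.of fun i k => h k i
  refine eq_zero_of_mulVec_eq_zero_of_rank_eq_card (A := Aᴴ) ?_ ?_
  · rw [rank_conjTranspose, hrank U, min_eq_left hU, Fintype.card_fin]
  · funext k
    exact hw k k.2

theorem stmt9_general {N K M : ℕ} (h : Fin K → Fin N → ℂ) (μ : Fin K → Fin M)
    (hrank : GenericRank h)
    (hord : ∀ m m' : ℕ, m ≤ m' → m' < M → Gsize μ m ≤ Gsize μ m')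
    (L : ℕ) (hN : N < NL μ (L + 1))
    (S : Finset (Fin M)) (hS : S.card = L + 1) :
    ∃ m ∈ S, ∀ w : Fin N → ℂ,
      (∀ k : Fin K, μ k ∈ S.erase m → hinner (h k) w = 0) → w = 0 := by
  have hS₀ : S.Nonempty := card_pos.1 (by omega)
  refine ⟨S.min' hS₀, S.min'_mem hS₀, fun w hw => ?_⟩
  set T := S.erase (S.min' hS₀)
  have hT : #T = L := by rw [card_erase_of_mem (S.min'_mem hS₀), hS]; rfl
  have hT_bounds : ∀ i ∈ T.map Fin.valEmbedding, 1 ≤ i ∧ i < M := by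
    simp only [mem_map, Fin.valEmbedding_apply, forall_exists_index, and_imp]
    rintro _ t ht rfl
    exact ⟨(Nat.succ_le_succ (Nat.zero_le _)).trans (S.min'_lt_of_mem_erase_min' hS₀ ht), t.2⟩
  refine eq_zero_of_hinner_eq_zero_of_card_le hrank (U := {k | μ k ∈ T}) ?_
    fun k hk => hw k (mem_filter.1 hk).2
  calc N ≤ ∑ j ∈ Ico 1 (1 + #(T.map Fin.valEmbedding)), Gsize μ j := by
        rw [card_map, hT, add_comm]; unfold NL at hN; omega
    _ ≤ ∑ j ∈ T.map Fin.valEmbedding, Gsize μ j :=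
        sum_Ico_le_sum_of_monotoneOn (fun m _ m' hm' hle => hord m m' hle hm') _ hT_bounds
    _ = #{k | μ k ∈ T} := by rw [sum_map, card_filter_mem_eq_sum_Gsize]; rfl

/-- **Impossibility of interference-free service to more than `M_D*` groups.** Under the
generic rank assumption, with nondecreasing group sizes and `N < N_{L+1}` for some
`L ∈ {1,…,M−1}`, for every subset `S` of `L+1` groups there is a group `m ∈ S` whose
beam cannot be zero-forced to the other groups of `S`: the only `w ∈ ℂ^N` with
`h_kᴴ w = 0` for every user `k` of a group in `S ∖ {m}` is `w = 0`. -/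
theorem stmt9 {N K M : ℕ} (h : Fin K → Fin N → ℂ) (μ : Fin K → Fin M)
    (hrank : GenericRank h)
    (hord : ∀ m m' : ℕ, m ≤ m' → m' < M → Gsize μ m ≤ Gsize μ m')
    (L : ℕ) (hL1 : 1 ≤ L) (hL2 : L + 1 ≤ M) (hN : N < NL μ (L + 1))
    (S : Finset (Fin M)) (hS : S.card = L + 1) :
    ∃ m ∈ S, ∀ w : Fin N → ℂ,
      (∀ k : Fin K, μ k ∈ S.erase m → hinner (h k) w = 0) → w = 0 :=
  stmt9_general h μ hrank hord L hN S hS
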